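/- arXiv:2105.10327 — 2 statements merged into one kernel-verified Lean document; each statement's English description precedes it below -/
import Mathlib

section
/- Let Σ be a finite alphabet and T : {1,…,n} → Σ a text of length n. For position i, let c_{≥i}(T[i]) be the number of indices j with i ≤ j ≤ n and T[j] = T[i], and let occ(σ) be the total number of occurrences of σ in T. Then the final range of forward-looking adaptive arithmetic coding satisfies r_f(T) = ∏_{i=1}^{n} c_{≥i}(T[i])/(n − i + 1) = (1/n!) · ∏_{σ ∈ Σ} occ(σ)!. -/
/-!
Group the positions by their symbol. Among the `k = occ σ` positions carrying `σ`, the one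
with `m` further occurrences of `σ` at or after it contributes the factor `m`, so these
positions contribute `k!` to the product of the numerators. The denominators
`n, n - 1, …, 1` multiply to `n!`.
-/

open Finset
open scoped Nat

theorem Finset.prod_card_filter_le_eq_factorial {ι : Type*} [LinearOrder ι] (s : Finset ι) :
    ∏ i ∈ s, #{j ∈ s | i ≤ j} = (#s)! := by
  induction s using Finset.induction_on_min with
  | empty => simp
  | insert a s ha ih =>
    have ha_notMem : a ∉ s := fun h => lt_irrefl a (ha a h)
    have h_first : #{j ∈ insert a s | a ≤ j} = #s + 1 := by
      rw [filter_true_of_mem fun j hj => ?_, card_insert_of_notMem ha_notMem]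
      rcases mem_insert.1 hj with rfl | hj
      exacts [le_rfl, (ha j hj).le]
    have h_rest : ∀ i ∈ s, #{j ∈ insert a s | i ≤ j} = #{j ∈ s | i ≤ j} := fun i hi => by
      rw [filter_insert, if_neg (not_le.2 (ha i hi))]
    rw [prod_insert ha_notMem, h_first, prod_congr rfl h_rest, ih, card_insert_of_notMem ha_notMem,
      Nat.factorial_succ]

theorem Fintype.prod_card_filter_le_and_eq_eq_prod_factorial {ι α : Type*} [LinearOrder ι]
    [Fintype ι] [Fintype α] [DecidableEq α] (T : ι → α) :
    ∏ i, #{j | i ≤ j ∧ T j = T i} = ∏ σ, (#{j | T j = σ})! := by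
  rw [← Finset.prod_fiberwise univ T]
  refine Finset.prod_congr rfl fun σ _ => ?_
  rw [← Finset.prod_card_filter_le_eq_factorial]
  refine Finset.prod_congr rfl fun i hi => congrArg Finset.card ?_
  ext j
  simp only [mem_filter, mem_univ, true_and] at hi ⊢
  rw [hi, and_comm]

theorem Fin.prod_univ_sub_eq_factorial (n : ℕ) : ∏ i : Fin n, (n - (i : ℕ)) = n ! := by
  rw [Fin.prod_univ_eq_prod_range (n - ·), ← Nat.descFactorial_eq_prod_range,
    Nat.descFactorial_self]

/-- Position `i : Fin n` stands for the 1-based position `i + 1`, so the denominator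
`n − (i + 1) + 1` is `n − i`. -/
theorem forward_adaptive_range_eq
    {α : Type*} [Fintype α] [DecidableEq α] {n : ℕ} (T : Fin n → α) :
    (∏ i : Fin n,
        ((univ.filter (fun j => i ≤ j ∧ T j = T i)).card : ℚ) /
          ((n - (i : ℕ) : ℕ) : ℚ)) =
      (1 / (Nat.factorial n : ℚ)) *
        ∏ σ : α, (Nat.factorial (univ.filter (fun j => T j = σ)).card : ℚ) := by
  rw [prod_div_distrib, ← Nat.cast_prod, ← Nat.cast_prod, ← Nat.cast_prod,
    Fintype.prod_card_filter_le_and_eq_eq_prod_factorial, Fin.prod_univ_sub_eq_factorial,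
    div_eq_mul_inv, mul_comm, one_div]
end

section
/- Let Σ be a finite alphabet of size m ≥ 1 and T : {1,…,n} → Σ a text of length n. Let r_b(T) = ∏_{i=1}^{n} (c_{<i}(T[i]) + 1)/(m + i − 1) be the final range of backward adaptive arithmetic coding and r_f(T) = ∏_{i=1}^{n} c_{≥i}(T[i])/(n − i + 1) the final range of forward-looking adaptive arithmetic coding. Then r_f(T) = C(m + n − 1, n) · r_b(T), where C(m + n − 1, n) is the binomial coefficient; equivalently, the forward-looking encoding is shorter than the backward-looking encoding by exactly log₂ C(m + n − 1, n) bits, a quantity depending only on the alphabet size m and the text length n and not on the content of T. -/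
/-! Grouping positions by symbol, both numerators equal `∏ a, (number of occurrences of a)!`:
along the `k` occurrences of a symbol the forward counts `c_{≥i}` run through `k, …, 1` and the
backward counts `c_{<i} + 1` through `1, …, k`. The denominators are `n!` and the rising factorial
`m (m + 1) ⋯ (m + n - 1) = n! · C(m + n - 1, n)`. -/

open Finset
open scoped Nat

namespace Finset

variable {β : Type*} [LinearOrder β]

theorem prod_card_filter_le_self (s : Finset β) : ∏ i ∈ s, #{j ∈ s | j ≤ i} = (#s)! := by
  induction s using induction_on_max with
  | empty => simp
  | insert a s hlt ih =>
    have ha : a ∉ s := fun h => lt_irrefl a (hlt a h)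
    have htop : {j ∈ insert a s | j ≤ a} = insert a s :=
      filter_true_of_mem fun j hj => (mem_insert.1 hj).elim le_of_eq fun h => (hlt j h).le
    have hrest : ∀ i ∈ s, #{j ∈ insert a s | j ≤ i} = #{j ∈ s | j ≤ i} := fun i hi => by
      rw [filter_insert, if_neg (not_le.2 (hlt i hi))]
    rw [prod_insert ha, htop, prod_congr rfl hrest, ih, card_insert_of_notMem ha,
      Nat.factorial_succ]

theorem prod_card_filter_ge_self (s : Finset β) : ∏ i ∈ s, #{j ∈ s | i ≤ j} = (#s)! :=
  prod_card_filter_le_self (β := βᵒᵈ) s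

theorem card_filter_lt_and_add_one {p : β → Prop} [DecidablePred p] {s : Finset β} {i : β}
    (hi : i ∈ s) (hp : p i) : #{j ∈ s | j < i ∧ p j} + 1 = #{j ∈ s | j ≤ i ∧ p j} := by
  have : {j ∈ s | j ≤ i ∧ p j} = insert i {j ∈ s | j < i ∧ p j} := by
    ext j
    simp only [mem_filter, mem_insert, le_iff_lt_or_eq]
    constructor
    · rintro ⟨hj, hlt | rfl, hpj⟩
      exacts [Or.inr ⟨hj, hlt, hpj⟩, Or.inl rfl]
    · rintro (rfl | ⟨hj, hlt, hpj⟩)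
      exacts [⟨hi, Or.inr rfl, hp⟩, ⟨hj, Or.inl hlt, hpj⟩]
  rw [this, card_insert_of_notMem (by simp)]

end Finset

section Occurrences

variable {ι α : Type*} [Fintype ι] [Fintype α] [DecidableEq α]

theorem prod_card_filter_and_eq_eq_prod_fiber (r : ι → ι → Prop) [∀ i, DecidablePred (r i)]
    (T : ι → α) :
    ∏ i, #{j | r i j ∧ T j = T i} =
      ∏ a, ∏ i ∈ {i | T i = a}, #{j ∈ {i | T i = a} | r i j} := by
  rw [← prod_fiberwise univ T]
  refine prod_congr rfl fun a _ => prod_congr rfl fun i hi => ?_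
  rw [(mem_filter.1 hi).2, filter_filter]
  simp_rw [and_comm]

variable [LinearOrder ι]

theorem prod_card_le_and_eq (T : ι → α) :
    ∏ i, #{j | j ≤ i ∧ T j = T i} = ∏ a, (#{i | T i = a})! :=
  (prod_card_filter_and_eq_eq_prod_fiber (fun i j => j ≤ i) T).trans <|
    prod_congr rfl fun _ _ => prod_card_filter_le_self _

theorem prod_card_ge_and_eq (T : ι → α) :
    ∏ i, #{j | i ≤ j ∧ T j = T i} = ∏ a, (#{i | T i = a})! :=
  (prod_card_filter_and_eq_eq_prod_fiber (fun i j => i ≤ j) T).trans <|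
    prod_congr rfl fun _ _ => prod_card_filter_ge_self _

theorem prod_card_ge_and_eq_eq_prod_card_lt_and_eq_add_one (T : ι → α) :
    ∏ i, #{j | i ≤ j ∧ T j = T i} = ∏ i, (#{j | j < i ∧ T j = T i} + 1) := by
  rw [prod_card_ge_and_eq, ← prod_card_le_and_eq]
  exact prod_congr rfl fun i _ =>
    (card_filter_lt_and_add_one (p := (T · = T i)) (mem_univ i) rfl).symm

end Occurrences

/-- With `m = Fintype.card α ≥ 1`, the final ranges of backward
and forward-looking adaptive arithmetic coding satisfy
`r_f(T) = C(m + n − 1, n) · r_b(T)`, a relation depending only on `m` and `n`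
and not on the content of `T`; equivalently, the forward-looking encoding is
shorter than the backward one by exactly `log₂ C(m+n−1, n)` bits. -/
theorem forward_eq_choose_mul_backward
    {α : Type*} [Fintype α] [DecidableEq α] (hm : 1 ≤ Fintype.card α)
    {n : ℕ} (T : Fin n → α) :
    (∏ i : Fin n,
        ((univ.filter (fun j => i ≤ j ∧ T j = T i)).card : ℚ) /
          ((n - (i : ℕ) : ℕ) : ℚ)) =
      (Nat.choose (Fintype.card α + n - 1) n : ℚ) *
        ∏ i : Fin n,
          (((univ.filter (fun j => j < i ∧ T j = T i)).card + 1 : ℚ)) /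
            (Fintype.card α + (i : ℕ)) := by
  set m := Fintype.card α
  have hforward : ∏ i : Fin n, ((n - (i : ℕ) : ℕ) : ℚ) = n ! := by
    rw [← Nat.cast_prod, Fin.prod_univ_eq_prod_range (fun i => n - i),
      ← Nat.descFactorial_eq_prod_range, Nat.descFactorial_self]
  have hbackward : ∏ i : Fin n, ((m : ℚ) + (i : ℕ)) = (m + n - 1).choose n * n ! := by
    rw [← Nat.cast_mul, mul_comm, ← Nat.ascFactorial_eq_factorial_mul_choose',
      Nat.ascFactorial_eq_prod_range, ← Fin.prod_univ_eq_prod_range, Nat.cast_prod]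
    push_cast
    rfl
  have hnum : ∏ i : Fin n, (#{j | i ≤ j ∧ T j = T i} : ℚ) =
      ∏ i : Fin n, ((#{j | j < i ∧ T j = T i} : ℚ) + 1) := by
    exact_mod_cast prod_card_ge_and_eq_eq_prod_card_lt_and_eq_add_one T
  have hchoose : ((m + n - 1).choose n : ℚ) ≠ 0 := by
    exact_mod_cast (Nat.choose_pos (by omega)).ne'
  rw [prod_div_distrib, prod_div_distrib, hforward, hbackward, hnum, ← mul_div_assoc,
    mul_div_mul_left _ _ hchoose]
end
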